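/- arXiv:2508.00487 — 3 statements merged into one kernel-verified Lean document; each statement's English description precedes it below -/
import Mathlib

section
/- Let V be a finite-dimensional real vector space with dim V = n ≥ 1, let B be a symmetric bilinear form on V, and let τ : V → ℝ be a nonzero linear functional such that B is negative definite on the hyperplane ker τ. Suppose there exists a vector Z ∈ V with B(Z,Z) > 0. Then B is nondegenerate and has Lorentzian signature, i.e. there is a basis e₀,…,e_{n−1} of V with B(e₀,e₀) = 1, B(eᵢ,eᵢ) = −1 for 1 ≤ i ≤ n−1, and B(eᵢ,eⱼ) = 0 for i ≠ j. -/
/-!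
In a `B`-orthogonal basis, two vectors `x, y` with `B x x ≥ 0` and `B y y ≥ 0` would span a plane
meeting the hyperplane `ker τ` in the nonzero vector `τ y • x - τ x • y`, on which `B` is
nonnegative. So at most one diagonal entry is nonnegative, and since `B Z Z > 0` is a sum of
squares weighted by the diagonal entries, exactly one is positive. Rescaling the basis vectors
then gives the Lorentzian basis, and a nonzero diagonal makes `B` nondegenerate.
-/

open Module

theorem LinearMap.IsOrthoᵢ.basis_reindex {R M ι ι' : Type*} [CommSemiring R]
    [AddCommMonoid M] [Module R M] {B : LinearMap.BilinForm R M} {v : Basis ι R M}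
    (hv : B.IsOrthoᵢ v) (σ : ι ≃ ι') : B.IsOrthoᵢ (v.reindex σ) := by
  rw [Basis.coe_reindex]
  exact fun _ _ hij => hv (σ.symm.injective.ne hij)

namespace LinearMap.BilinForm

theorem apply_self_eq_sum_of_isOrthoᵢ {R M ι : Type*} [CommRing R] [AddCommGroup M] [Module R M]
    [Fintype ι] {B : LinearMap.BilinForm R M} {v : Basis ι R M} (hv : B.IsOrthoᵢ v) (x : M) :
    B x x = ∑ i, v.repr x i ^ 2 * B (v i) (v i) := by
  classical
  conv_lhs => rw [← v.sum_repr x]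
  simp only [map_sum, map_smul, LinearMap.sum_apply, LinearMap.smul_apply, smul_eq_mul]
  refine Finset.sum_congr rfl fun i _ => ?_
  rw [Finset.sum_eq_single i (fun j _ hji => by rw [hv hji, mul_zero]) (by simp)]
  ring

section OrderedField

variable {K V ι : Type*} [Field K] [LinearOrder K] [IsStrictOrderedRing K]
  [AddCommGroup V] [Module K V] {B : LinearMap.BilinForm K V}

theorem exists_pos_apply_basis_self [Fintype ι] {v : Basis ι K V} (hv : B.IsOrthoᵢ v) {x : V}
    (hx : 0 < B x x) : ∃ i, 0 < B (v i) (v i) := by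
  by_contra! h
  refine hx.not_ge ?_
  rw [apply_self_eq_sum_of_isOrthoᵢ hv]
  exact Finset.sum_nonpos fun i _ => mul_nonpos_of_nonneg_of_nonpos (sq_nonneg _) (h i)

theorem apply_self_neg_of_isOrtho_of_nonneg {τ : V →ₗ[K] K}
    (hneg : ∀ x ∈ LinearMap.ker τ, x ≠ 0 → B x x < 0) {x y : V}
    (hxy : LinearIndependent K ![x, y]) (hBxy : B x y = 0) (hByx : B y x = 0)
    (hx : 0 ≤ B x x) : B y y < 0 := by
  by_contra! hy
  set w := τ y • x - τ x • y
  have hw : w ∈ LinearMap.ker τ := by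
    simp only [w, LinearMap.mem_ker, map_sub, map_smul, smul_eq_mul]
    ring
  have hBw : B w w = τ y ^ 2 * B x x + τ x ^ 2 * B y y := by
    simp only [w, map_sub, map_smul, LinearMap.sub_apply, LinearMap.smul_apply, smul_eq_mul,
      hBxy, hByx]
    ring
  have hw0 : w = 0 := by
    by_contra hw0
    refine (hneg w hw hw0).not_ge ?_
    rw [hBw]
    exact add_nonneg (mul_nonneg (sq_nonneg _) hx) (mul_nonneg (sq_nonneg _) hy)
  obtain ⟨hτy, hτx⟩ := LinearIndependent.pair_iff.mp hxy (τ y) (-τ x)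
    (by rw [neg_smul, ← sub_eq_add_neg]; exact hw0)
  exact (hneg x (by simpa using neg_eq_zero.mp hτx) (hxy.ne_zero 0)).not_ge hx

theorem apply_basis_self_neg_of_ne {v : Basis ι K V} (hv : B.IsOrthoᵢ v) {τ : V →ₗ[K] K}
    (hneg : ∀ x ∈ LinearMap.ker τ, x ≠ 0 → B x x < 0) {i j : ι} (hij : i ≠ j)
    (hi : 0 ≤ B (v i) (v i)) : B (v j) (v j) < 0 :=
  apply_self_neg_of_isOrtho_of_nonneg hneg
    (LinearIndependent.pair_iff.mpr <|
      (LinearIndepOn.pair_iff v hij).mp (v.linearIndependent.linearIndepOn _))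
    (hv hij) (hv hij.symm) hi

end OrderedField

section Real

variable {V ι : Type*} [AddCommGroup V] [Module ℝ V] {B : LinearMap.BilinForm ℝ V}

theorem exists_basis_apply_self_eq_sign {v : Basis ι ℝ V} (hv : B.IsOrthoᵢ v)
    (h : ∀ i, B (v i) (v i) ≠ 0) :
    ∃ e : Basis ι ℝ V, B.IsOrthoᵢ e ∧ ∀ i, B (e i) (e i) = SignType.sign (B (v i) (v i)) := by
  have hc : ∀ i, IsUnit (√|B (v i) (v i)|)⁻¹ := fun i =>
    (inv_pos.mpr (Real.sqrt_pos.mpr (abs_pos.mpr (h i)))).ne'.isUnit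
  refine ⟨v.isUnitSMul hc, fun i j hij => ?_, fun i => ?_⟩
  · simp only [Function.onFun, Basis.isUnitSMul_apply, map_smul, LinearMap.smul_apply,
      (hv hij : B (v i) (v j) = 0), smul_zero]
  · simp only [Basis.isUnitSMul_apply, map_smul, LinearMap.smul_apply, smul_eq_mul]
    rw [← mul_assoc, ← mul_inv, Real.mul_self_sqrt (abs_nonneg _),
      inv_mul_eq_iff_eq_mul₀ (abs_ne_zero.mpr (h i)), mul_comm, sign_mul_abs]

theorem exists_lorentzian_basis [FiniteDimensional ℝ V] [Fintype ι] [DecidableEq ι]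
    (hB : LinearMap.IsSymm B) {τ : V →ₗ[ℝ] ℝ}
    (hneg : ∀ x ∈ LinearMap.ker τ, x ≠ 0 → B x x < 0) {Z : V} (hZ : 0 < B Z Z)
    (hι : Fintype.card ι = finrank ℝ V) (i₀ : ι) :
    ∃ e : Basis ι ℝ V, B.IsOrthoᵢ e ∧ ∀ i, B (e i) (e i) = if i = i₀ then 1 else -1 := by
  obtain ⟨u, hu⟩ := exists_orthogonal_basis hB
  obtain ⟨j, hj⟩ := exists_pos_apply_basis_self hu hZ
  let ρ := (Fintype.equivFinOfCardEq hι).symm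
  let σ : Fin (finrank ℝ V) ≃ ι := ρ.trans (Equiv.swap (ρ j) i₀)
  let v := u.reindex σ
  have hv : B.IsOrthoᵢ v := hu.basis_reindex σ
  have hv_pos : 0 < B (v i₀) (v i₀) := by simpa [v, σ] using hj
  have hv_neg : ∀ i ≠ i₀, B (v i) (v i) < 0 := fun i hi =>
    apply_basis_self_neg_of_ne hv hneg (Ne.symm hi) hv_pos.le
  obtain ⟨e, he, he_sign⟩ := exists_basis_apply_self_eq_sign hv fun i => by
    rcases eq_or_ne i i₀ with rfl | hi
    exacts [hv_pos.ne', (hv_neg i hi).ne]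
  refine ⟨e, he, fun i => ?_⟩
  split_ifs with hi
  · simp [he_sign, hi, hv_pos]
  · simp [he_sign, hv_neg i hi]

end Real

end LinearMap.BilinForm

open LinearMap.BilinForm in
/-- Let `V` be a finite-dimensional real vector space with `dim V = n ≥ 1`,
`B` a symmetric bilinear form on `V`, and `τ : V → ℝ` a nonzero linear functional such that
`B` is negative definite on `ker τ`. If there is `Z` with `B Z Z > 0`, then `B` is
nondegenerate and has Lorentzian signature. -/
theorem lorentzian_of_negDef_on_hyperplane_and_timelike_vector
    {V : Type*} [AddCommGroup V] [Module ℝ V] [FiniteDimensional ℝ V]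
    (n : ℕ) (hn : 1 ≤ n) (hdim : Module.finrank ℝ V = n)
    (B : V →ₗ[ℝ] V →ₗ[ℝ] ℝ) (hBsymm : ∀ x y : V, B x y = B y x)
    (τ : V →ₗ[ℝ] ℝ)
    (hneg : ∀ x ∈ LinearMap.ker τ, x ≠ 0 → B x x < 0)
    (Z : V) (hZ : 0 < B Z Z) :
    (∀ x : V, (∀ y : V, B x y = 0) → x = 0) ∧
    ∃ e : Module.Basis (Fin n) ℝ V,
      B (e ⟨0, by omega⟩) (e ⟨0, by omega⟩) = 1 ∧
      (∀ i : Fin n, (i : ℕ) ≠ 0 → B (e i) (e i) = -1) ∧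
      (∀ i j : Fin n, i ≠ j → B (e i) (e j) = 0) := by
  obtain ⟨e, he, he_diag⟩ := exists_lorentzian_basis ⟨hBsymm⟩ hneg hZ
    (by rw [Fintype.card_fin, hdim]) (⟨0, by omega⟩ : Fin n)
  refine ⟨he.separatingLeft_of_not_isOrtho_basis_self e fun i => ?_, e, ?_, fun i hi => ?_,
    fun i j hij => he hij⟩
  · rw [he_diag]; split_ifs <;> norm_num
  · simp [he_diag]
  · rw [he_diag, if_neg (Fin.ne_of_val_ne hi)]
end

section
/- Let H be a complex Hilbert space and let q, r be bounded linear operators on H satisfying q† ∘ q = 1 + r† ∘ r, and suppose q is invertible with bounded inverse. Then ‖q‖ ≥ 1 and the operator norm of r ∘ q⁻¹ satisfies ‖r ∘ q⁻¹‖² ≤ 1 − ‖q‖⁻²; in particular ‖r ∘ q⁻¹‖ < 1. -/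
open ContinuousLinearMap

/-! Testing `q† q = 1 + r† r` against `x` gives `‖q x‖² = ‖x‖² + ‖r x‖²`, so `q` is expanding and
`‖q‖ ≥ 1`. Applied to `x = q⁻¹ y` the same identity reads `‖r q⁻¹ y‖² = ‖y‖² - ‖q⁻¹ y‖²`, and
`‖y‖ ≤ ‖q‖ ‖q⁻¹ y‖` bounds the subtracted term from below by `‖q‖⁻² ‖y‖²`. -/

section InnerProductSpace

variable {𝕜 E F G : Type*} [RCLike 𝕜]
  [NormedAddCommGroup E] [InnerProductSpace 𝕜 E] [CompleteSpace E]
  [NormedAddCommGroup F] [InnerProductSpace 𝕜 F] [CompleteSpace F]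
  [NormedAddCommGroup G] [InnerProductSpace 𝕜 G] [CompleteSpace G]

theorem norm_apply_sq_eq_add_of_adjoint_comp_self_eq {q : E →L[𝕜] F} {r : E →L[𝕜] G}
    (h : adjoint q ∘L q = 1 + adjoint r ∘L r) (x : E) :
    ‖q x‖ ^ 2 = ‖x‖ ^ 2 + ‖r x‖ ^ 2 := by
  rw [apply_norm_sq_eq_inner_adjoint_left, apply_norm_sq_eq_inner_adjoint_left, h,
    add_apply, one_apply_eq_self, inner_add_left, map_add, inner_self_eq_norm_sq]

end InnerProductSpace

theorem ContinuousLinearMap.one_le_opNorm_of_norm_le_norm_apply {𝕜 E F : Type*}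
    [NontriviallyNormedField 𝕜] [NormedAddCommGroup E] [NormedSpace 𝕜 E] [Nontrivial E]
    [SeminormedAddCommGroup F] [NormedSpace 𝕜 F] {q : E →L[𝕜] F} (h : ∀ x, ‖x‖ ≤ ‖q x‖) :
    1 ≤ ‖q‖ := by
  obtain ⟨x, hx⟩ := exists_ne (0 : E)
  refine le_of_mul_le_mul_right ?_ (norm_pos_iff.2 hx)
  rw [one_mul]
  exact (h x).trans (q.le_opNorm x)

section NormedSpace

variable {𝕜 E F G : Type*} [NontriviallyNormedField 𝕜]
  [SeminormedAddCommGroup E] [NormedSpace 𝕜 E]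
  [SeminormedAddCommGroup F] [NormedSpace 𝕜 F]
  [SeminormedAddCommGroup G] [NormedSpace 𝕜 G]

theorem ContinuousLinearMap.opNorm_sq_le_of_norm_apply_sq_le {f : E →L[𝕜] F} {c : ℝ} (hc : 0 ≤ c)
    (h : ∀ x, ‖f x‖ ^ 2 ≤ c * ‖x‖ ^ 2) : ‖f‖ ^ 2 ≤ c := by
  refine (Real.le_sqrt (norm_nonneg f) hc).1 (f.opNorm_le_bound (Real.sqrt_nonneg c) fun x => ?_)
  rw [← Real.sqrt_sq (norm_nonneg x), ← Real.sqrt_mul hc]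
  exact Real.le_sqrt_of_sq_le (h x)

theorem norm_apply_rightInverse_sq_le {q : E →L[𝕜] F} {r : E →L[𝕜] G} {qinv : F →L[𝕜] E}
    (hqr : ∀ x, ‖q x‖ ^ 2 = ‖x‖ ^ 2 + ‖r x‖ ^ 2) (hinv : Function.RightInverse qinv q) (y : F) :
    ‖r (qinv y)‖ ^ 2 ≤ (1 - (‖q‖ ^ 2)⁻¹) * ‖y‖ ^ 2 := by
  have hy := pow_le_pow_left₀ (norm_nonneg _) (q.le_opNorm (qinv y)) 2
  rw [hinv y, mul_pow] at hy
  have hqinv : (‖q‖ ^ 2)⁻¹ * ‖y‖ ^ 2 ≤ ‖qinv y‖ ^ 2 :=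
    inv_mul_le_of_le_mul₀ (by positivity) (by positivity) hy
  have hr := hqr (qinv y)
  rw [hinv y] at hr
  linarith

end NormedSpace

theorem norm_r_comp_qinv_lt_one_general
    {H : Type*} [NormedAddCommGroup H] [InnerProductSpace ℂ H] [CompleteSpace H]
    [Nontrivial H]
    (q r qinv : H →L[ℂ] H)
    (hq : adjoint q * q = 1 + adjoint r * r)
    (hinv₂ : q * qinv = 1) :
    1 ≤ ‖q‖ ∧ ‖r * qinv‖ ^ 2 ≤ 1 - (‖q‖ ^ 2)⁻¹ ∧ ‖r * qinv‖ < 1 := by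
  have hqr := norm_apply_sq_eq_add_of_adjoint_comp_self_eq hq
  have hq1 : 1 ≤ ‖q‖ := one_le_opNorm_of_norm_le_norm_apply fun x =>
    le_of_pow_le_pow_left₀ two_ne_zero (norm_nonneg _) (by rw [hqr x]; simp)
  have hc : 0 ≤ 1 - (‖q‖ ^ 2)⁻¹ := sub_nonneg.2 (inv_le_one_of_one_le₀ (one_le_pow₀ hq1))
  have hK : ‖r * qinv‖ ^ 2 ≤ 1 - (‖q‖ ^ 2)⁻¹ :=
    opNorm_sq_le_of_norm_apply_sq_le hc
      (norm_apply_rightInverse_sq_le hqr fun y => congr($hinv₂ y))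
  have hlt : 1 - (‖q‖ ^ 2)⁻¹ < 1 := sub_lt_self 1 (by positivity)
  exact ⟨hq1, hK, (sq_lt_one_iff₀ (norm_nonneg _)).1 (hK.trans_lt hlt)⟩

/-- Let `H` be a complex Hilbert space and `q, r` bounded operators on `H`
with `q† q = 1 + r† r`, and suppose `q` is invertible with bounded inverse `qinv`.
Then `‖q‖ ≥ 1` and `‖r q⁻¹‖² ≤ 1 − ‖q‖⁻²`; in particular `‖r q⁻¹‖ < 1`. -/
theorem norm_r_comp_qinv_lt_one
    {H : Type*} [NormedAddCommGroup H] [InnerProductSpace ℂ H] [CompleteSpace H]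
    [Nontrivial H]
    (q r qinv : H →L[ℂ] H)
    (hq : adjoint q * q = 1 + adjoint r * r)
    (hinv₁ : qinv * q = 1) (hinv₂ : q * qinv = 1) :
    1 ≤ ‖q‖ ∧ ‖r * qinv‖ ^ 2 ≤ 1 - (‖q‖ ^ 2)⁻¹ ∧ ‖r * qinv‖ < 1 :=
  norm_r_comp_qinv_lt_one_general q r qinv hq hinv₂
end

section
/- For all natural numbers n, m, k and every real number x with 0 ≤ x < 1, the series over j ∈ ℕ with terms jᵏ · (n + 2j)ᵐ · √((n + 2j)! / n!) · xʲ / (2ʲ · j!) is summable. -/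
/-!
Since `(n + 2j)! ≤ (n + 2j)ⁿ (2j)!` and `(2j)! ≤ 4ʲ (j!)²` (central binomial bound), the square
root is at most `(n + 2j)ⁿ 2ʲ j!`, which absorbs the denominator `2ʲ j!`. What remains is a
polynomial in `j` times `xʲ`, and such series converge for `|x| < 1`.
-/

open Nat Polynomial

theorem Nat.factorial_add_le_pow_mul_factorial (a b : ℕ) : (a + b)! ≤ (a + b) ^ a * b ! := by
  have h := Nat.factorial_mul_descFactorial (Nat.le_add_right a b)
  rw [Nat.add_sub_cancel_left] at h
  rw [← h, mul_comm]
  exact Nat.mul_le_mul_right _ (Nat.descFactorial_le_pow _ _)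

theorem Nat.factorial_two_mul_le_sq (n : ℕ) : (2 * n)! ≤ (2 ^ n * n !) ^ 2 := by
  have h := Nat.choose_mul_factorial_mul_factorial (Nat.le_mul_of_pos_left n two_pos)
  rw [two_mul, Nat.add_sub_cancel, ← two_mul, ← Nat.centralBinom_eq_two_mul_choose] at h
  calc (2 * n)! = n.centralBinom * n ! * n ! := h.symm
    _ ≤ 4 ^ n * n ! * n ! := by gcongr; exact Nat.centralBinom_le_four_pow n
    _ = (2 ^ n * n !) ^ 2 := by rw [show 4 = 2 ^ 2 by rfl, ← pow_mul, mul_comm 2 n, pow_mul]; ring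

theorem Nat.factorial_add_two_mul_le (n j : ℕ) :
    (n + 2 * j)! ≤ ((n + 2 * j) ^ n * (2 ^ j * j !)) ^ 2 :=
  calc (n + 2 * j)! ≤ (n + 2 * j) ^ n * (2 * j)! := Nat.factorial_add_le_pow_mul_factorial _ _
    _ ≤ ((n + 2 * j) ^ n) ^ 2 * (2 ^ j * j !) ^ 2 :=
      Nat.mul_le_mul (Nat.le_self_pow two_ne_zero _) (Nat.factorial_two_mul_le_sq j)
    _ = ((n + 2 * j) ^ n * (2 ^ j * j !)) ^ 2 := (mul_pow _ _ _).symm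

theorem Real.sqrt_factorial_add_two_mul_div_le (n j : ℕ) :
    √(((n + 2 * j)! : ℝ) / n !) ≤ ((n : ℝ) + 2 * j) ^ n * (2 ^ j * j !) := by
  refine Real.sqrt_le_iff.mpr ⟨by positivity, ?_⟩
  calc ((n + 2 * j)! : ℝ) / n ! ≤ (n + 2 * j)! :=
        div_le_self (by positivity) (by exact_mod_cast n.factorial_pos)
    _ ≤ _ := by exact_mod_cast Nat.factorial_add_two_mul_le n j

theorem summable_eval_mul_geometric_of_norm_lt_one {R : Type*} [NormedRing R]
    [HasSummableGeomSeries R] (P : R[X]) {r : R} (hr : ‖r‖ < 1) :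
    Summable fun j : ℕ => P.eval (j : R) * r ^ j := by
  simp_rw [eval_eq_sum_range, Finset.sum_mul]
  refine summable_sum fun i _ => ?_
  simp_rw [mul_assoc]
  exact (summable_pow_mul_geometric_of_norm_lt_one i hr).mul_left _

/-- For all natural numbers `n, m, k` and every real `x` with `0 ≤ x < 1`,
the series `∑_j jᵏ (n + 2j)ᵐ √((n+2j)!/n!) xʲ / (2ʲ j!)` is summable. -/
theorem summable_fock_exponential_series (n m k : ℕ) (x : ℝ) (hx0 : 0 ≤ x) (hx1 : x < 1) :
    Summable fun j : ℕ =>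
      (j : ℝ) ^ k * ((n : ℝ) + 2 * (j : ℝ)) ^ m *
        Real.sqrt ((Nat.factorial (n + 2 * j) : ℝ) / (Nat.factorial n : ℝ)) *
        x ^ j / ((2 : ℝ) ^ j * (Nat.factorial j : ℝ)) := by
  have hbound : Summable fun j : ℕ => (j : ℝ) ^ k * ((n : ℝ) + 2 * j) ^ (m + n) * x ^ j := by
    have hx : ‖x‖ < 1 := by rwa [Real.norm_of_nonneg hx0]
    exact (summable_eval_mul_geometric_of_norm_lt_one (X ^ k * (C (n : ℝ) + 2 * X) ^ (m + n))
      hx).congr fun j => by simp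
  refine hbound.of_nonneg_of_le (fun j => by positivity) fun j => ?_
  rw [div_le_iff₀ (by positivity), pow_add]
  calc _ ≤ (j : ℝ) ^ k * ((n : ℝ) + 2 * j) ^ m * (((n : ℝ) + 2 * j) ^ n * (2 ^ j * j !)) *
        x ^ j := by
        gcongr; exact Real.sqrt_factorial_add_two_mul_div_le n j
    _ = _ := by ring
end
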